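/- For s, t ∈ Z_k with t ≠ 0 and s ≠ t, the set Y(s,t) of nonzero vertices with coordinate sum ≡ s (mod k) and last nonzero coordinate equal to t has exactly (k^{n-1}-1)/(k-1) elements. -/

import Mathlib

/-- Two vertices of the Hamming graph `H(n,k)` are adjacent iff they differ
in exactly one coordinate. -/
def HAdj {n k : ℕ} (v w : Fin n → ZMod k) : Prop := ∃! i, v i ≠ w i

/-- `X n k s` is the set of vertices whose coordinate sum is `s` in `ZMod k`. -/
def X (n k : ℕ) (s : ZMod k) : Set (Fin n → ZMod k) := {v | ∑ i, v i = s}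

/-- `ellN v` is the (0-based) largest index at which `v` is nonzero (0 if `v = 0`). -/
def ellN {n k : ℕ} (v : Fin n → ZMod k) : ℕ :=
  (Finset.univ.filter (fun i => v i ≠ 0)).sup (fun i : Fin n => (i : ℕ))

/-- `Y n k s t` is the set of nonzero vertices with coordinate sum `s`
whose last nonzero coordinate equals `t`. -/
def Y (n k : ℕ) (s t : ZMod k) : Set (Fin n → ZMod k) :=
  {v | v ≠ 0 ∧ ∑ i, v i = s ∧ ∃ i : Fin n, (i : ℕ) = ellN v ∧ v i = t}

/-! A vector of `Y(s,t)` whose last nonzero coordinate sits at position `ℓ` is `(u, t, 0, …, 0)`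
with `u ∈ Z_k^ℓ` of coordinate sum `s - t`. For `ℓ = 0` there is no such `u` because `s ≠ t`; for
`ℓ ≥ 1` there are `k^(ℓ-1)` of them, the last coordinate of `u` being forced by the others. Summing
the geometric series over `ℓ = 1, …, n - 1` gives `(k^(n-1) - 1)/(k - 1)`. -/

open Finset

section PadAt

variable {R : Type*} {n : ℕ}

def padAt [Zero R] (ℓ : Fin n) (u : Fin ℓ → R) (t : R) : Fin n → R :=
  fun j => if h : (j : ℕ) < ℓ then u ⟨j, h⟩ else if j = ℓ then t else 0

variable [Zero R] (ℓ : Fin n) (u : Fin ℓ → R) (t : R)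

lemma padAt_of_lt {j : Fin n} (h : (j : ℕ) < ℓ) : padAt ℓ u t j = u ⟨j, h⟩ := by
  simp [padAt, h]

@[simp]
lemma padAt_self : padAt ℓ u t ℓ = t := by
  simp [padAt]

lemma padAt_of_gt {j : Fin n} (h : (ℓ : ℕ) < j) : padAt ℓ u t j = 0 := by
  have hj : j ≠ ℓ := fun e => by simp [e] at h
  simp [padAt, hj, h.not_gt]

end PadAt

lemma sum_padAt {R : Type*} {n : ℕ} [AddCommMonoid R] (ℓ : Fin n) (u : Fin ℓ → R) (t : R) :
    ∑ j, padAt ℓ u t j = ∑ i, u i + t := by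
  have hcast : ∑ i : Fin (ℓ + 1), padAt ℓ u t (Fin.castLE ℓ.isLt i) = ∑ j, padAt ℓ u t j := by
    refine Fintype.sum_of_injective _ (Fin.castLE_injective _) _ _ (fun j hj => ?_) fun _ => rfl
    exact padAt_of_gt ℓ u t (not_le.mp fun hle => hj ⟨⟨j, Nat.lt_succ_of_le hle⟩, rfl⟩)
  rw [← hcast, Fin.sum_univ_castSucc]
  congr 1
  · exact sum_congr rfl fun i _ => padAt_of_lt ℓ u t i.isLt
  · exact padAt_self ℓ u t

section ellN

variable {n k : ℕ} {v : Fin n → ZMod k}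

lemma le_ellN {j : Fin n} (h : v j ≠ 0) : (j : ℕ) ≤ ellN v :=
  le_sup (by simp [h])

lemma eq_zero_of_ellN_lt {j : Fin n} (h : ellN v < j) : v j = 0 := by
  by_contra hj
  exact (le_ellN hj).not_gt h

lemma ellN_eq {i : Fin n} (hi : v i ≠ 0) (hlast : ∀ j : Fin n, (i : ℕ) < j → v j = 0) :
    ellN v = i := by
  refine le_antisymm (Finset.sup_le fun j hj => ?_) (le_ellN hi)
  simp only [mem_filter, mem_univ, true_and] at hj
  exact not_lt.mp fun h => hj (hlast j h)

lemma ellN_padAt {t : ZMod k} (ht : t ≠ 0) (ℓ : Fin n) (u : Fin ℓ → ZMod k) :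
    ellN (padAt ℓ u t) = ℓ :=
  ellN_eq (by simpa using ht) fun _ => padAt_of_gt ℓ u t

end ellN

section FixedSum

variable {G : Type*} [AddCommGroup G]

def fixedSumEquiv (m : ℕ) (c : G) : {u : Fin (m + 1) → G // ∑ i, u i = c} ≃ (Fin m → G) where
  toFun u := Fin.init u.1
  invFun w := ⟨Fin.snoc w (c - ∑ i, w i), by simp [Fin.sum_univ_castSucc]⟩
  left_inv u := by
    have hsum := u.2
    rw [Fin.sum_univ_castSucc] at hsum
    have hlast : u.1 (Fin.last m) = c - ∑ i, Fin.init u.1 i := eq_sub_of_add_eq' hsum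
    ext1
    conv_rhs => rw [← Fin.snoc_init_self u.1, hlast]
  right_inv w := by
    simp

lemma card_fixedSum_succ [Finite G] (m : ℕ) (c : G) :
    Nat.card {u : Fin (m + 1) → G // ∑ i, u i = c} = Nat.card G ^ m := by
  rw [Nat.card_congr (fixedSumEquiv m c), Nat.card_fun, Nat.card_fin]

lemma card_fixedSum_zero {c : G} (hc : c ≠ 0) :
    Nat.card {u : Fin 0 → G // ∑ i, u i = c} = 0 := by
  have : IsEmpty {u : Fin 0 → G // ∑ i, u i = c} := ⟨fun u => hc (by simpa using u.2.symm)⟩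
  exact Nat.card_of_isEmpty

end FixedSum

section Decomposition

variable {n k : ℕ} {s t : ZMod k}

def padSigma (n : ℕ) (s t : ZMod k) :
    (Σ ℓ : Fin n, {u : Fin ℓ → ZMod k // ∑ i, u i = s - t}) → Fin n → ZMod k :=
  fun p => padAt p.1 p.2.1 t

lemma padSigma_injective (ht : t ≠ 0) : Function.Injective (padSigma n s t) := by
  rintro ⟨ℓ, u, hu⟩ ⟨ℓ', u', hu'⟩ h
  have hv : padAt ℓ u t = padAt ℓ' u' t := h
  obtain rfl : ℓ = ℓ' := Fin.ext (by rw [← ellN_padAt ht ℓ u, ← ellN_padAt ht ℓ' u', hv])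
  obtain rfl : u = u' := funext fun i => by
    have hi := congrFun hv (Fin.castLE ℓ.isLt.le i)
    rwa [padAt_of_lt (j := Fin.castLE _ i) ℓ u t i.isLt,
      padAt_of_lt (j := Fin.castLE _ i) ℓ u' t i.isLt] at hi
  rfl

lemma range_padSigma (ht : t ≠ 0) : Set.range (padSigma n s t) = Y n k s t := by
  ext v
  constructor
  · rintro ⟨⟨ℓ, u, hu⟩, rfl⟩
    refine ⟨fun h => ht ?_, ?_, ℓ, (ellN_padAt ht ℓ u).symm, padAt_self ℓ u t⟩
    · simpa [padSigma] using congrFun h ℓ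
    · simp [padSigma, sum_padAt, hu]
  · rintro ⟨-, hvs, ℓ, hℓ, hvℓ⟩
    set u : Fin ℓ → ZMod k := fun i => v (Fin.castLE ℓ.isLt.le i)
    have hpad : padAt ℓ u t = v := by
      funext j
      rcases lt_trichotomy (j : ℕ) ℓ with h | h | h
      · exact padAt_of_lt ℓ u t h
      · rw [Fin.ext h, padAt_self, hvℓ]
      · rw [padAt_of_gt ℓ u t h, eq_zero_of_ellN_lt (v := v) (j := j) (by omega)]
    have hu : ∑ i, u i = s - t := by
      rw [eq_sub_iff_add_eq, ← sum_padAt, hpad, hvs]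
    exact ⟨⟨ℓ, u, hu⟩, hpad⟩

end Decomposition

theorem stmt7_general (n k : ℕ) (hk : 2 ≤ k) (s t : ZMod k) (ht : t ≠ 0)
    (hst : s ≠ t) : (Y n k s t).ncard = (k ^ (n - 1) - 1) / (k - 1) := by
  have : NeZero k := ⟨by omega⟩
  rw [← range_padSigma ht, Set.ncard_range_of_injective (padSigma_injective ht), Nat.card_sigma]
  cases n with
  | zero => simp
  | succ m =>
    have hfirst : Nat.card {u : Fin ((0 : Fin (m + 1)) : ℕ) → ZMod k // ∑ i, u i = s - t} = 0 :=
      card_fixedSum_zero (sub_ne_zero.mpr hst)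
    rw [Fin.sum_univ_succ, hfirst, zero_add]
    simp only [Fin.val_succ, card_fixedSum_succ, Nat.card_zmod, add_tsub_cancel_right]
    rw [Fin.sum_univ_eq_sum_range (k ^ ·), Nat.geomSum_eq hk]

theorem stmt7 (n k : ℕ) (hn : 1 ≤ n) (hk : 2 ≤ k) (s t : ZMod k) (ht : t ≠ 0)
    (hst : s ≠ t) : (Y n k s t).ncard = (k ^ (n - 1) - 1) / (k - 1) :=
  stmt7_general n k hk s t ht hst
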